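/- Let S and A be finite nonempty sets, Z := S × A, R : Z → [0,1], γ ∈ (0,1), β := 1/(1−γ), and L ≥ 0. Let μ₁, μ₂ ∈ ℝ^m and let f_z^{s′} : ℝ^m → ℝ for each (z,s′) ∈ Z × S satisfy: P(s′|z) := f_z^{s′}(μ₁) defines a transition probability function (nonnegative, rows summing to 1), P′(s′|z) := f_z^{s′}(μ₂) also defines a transition probability function, and |f_z^{s′}(ν₁) − f_z^{s′}(ν₂)| ≤ L·P(s′|z)·‖ν₁ − ν₂‖₂ for all ν₁, ν₂ ∈ ℝ^m. If Q : Z → ℝ satisfies the Bellman optimality equation for (P,R,γ) and Q′ : Z → ℝ satisfies the Bellman optimality equation for (P′,R,γ), then max_{z∈Z} |Q(z) − Q′(z)| ≤ γ·β²·L·‖μ₁ − μ₂‖₂. -/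

import Mathlib

/-!
Measure action-value functions in the sup norm. A Bellman fixed point satisfies
`‖Q‖ ≤ ‖R‖ + γ‖Q‖`, so `‖Q‖ ≤ β`. Writing `V s = max_a Q (s, a)`, the difference of the two
fixed points splits as `γ ∑ (P - P') V + γ ∑ P' (V - V')`; the Lipschitz hypothesis makes
`|P - P'| ≤ L‖μ₁ - μ₂‖ P`, so the first sum is at most `γ L ‖μ₁ - μ₂‖ β`, while the second is at
most `γ ‖Q - Q'‖` because taking maxima is 1-Lipschitz. Solving the resulting contraction
inequality costs another factor `β`.
-/

open Finset

lemma abs_iSup_sub_iSup_le {ι : Type*} [Finite ι] {f g : ι → ℝ} {c : ℝ} (hc : 0 ≤ c)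
    (h : ∀ i, |f i - g i| ≤ c) : |(⨆ i, f i) - ⨆ i, g i| ≤ c := by
  rcases isEmpty_or_nonempty ι with hι | hι
  · simpa [Real.iSup_of_isEmpty] using hc
  have hf : BddAbove (Set.range f) := (Set.finite_range f).bddAbove
  have hg : BddAbove (Set.range g) := (Set.finite_range g).bddAbove
  rw [abs_sub_le_iff, sub_le_iff_le_add, sub_le_iff_le_add]
  constructor
  · exact ciSup_le fun i => by linarith [(abs_le.1 (h i)).2, le_ciSup hg i]
  · exact ciSup_le fun i => by linarith [(abs_le.1 (h i)).1, le_ciSup hf i]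

lemma abs_sum_mul_le_mul_norm {ι : Type*} [Fintype ι] {p w v : ι → ℝ} {c : ℝ}
    (hp : ∑ i, p i = 1) (hw : ∀ i, |w i| ≤ c * p i) : |∑ i, w i * v i| ≤ c * ‖v‖ :=
  calc |∑ i, w i * v i| ≤ ∑ i, |w i| * |v i| := by
        simpa only [abs_mul] using abs_sum_le_sum_abs (fun i => w i * v i) univ
    _ ≤ ∑ i, c * p i * ‖v‖ := by
        gcongr with i
        · exact (abs_nonneg _).trans (hw i)
        · exact hw i
        · exact norm_le_pi_norm v i
    _ = c * ‖v‖ := by rw [← sum_mul, ← mul_sum, hp, mul_one]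

lemma abs_sum_mul_le_norm {ι : Type*} [Fintype ι] {p v : ι → ℝ} (hp0 : ∀ i, 0 ≤ p i)
    (hp1 : ∑ i, p i = 1) : |∑ i, p i * v i| ≤ ‖v‖ := by
  simpa using abs_sum_mul_le_mul_norm (c := 1) (v := v) hp1 fun i => by
    rw [one_mul, abs_of_nonneg (hp0 i)]

lemma le_div_one_sub_of_le_add_mul {x a γ : ℝ} (hγ : γ < 1) (h : x ≤ a + γ * x) :
    x ≤ a / (1 - γ) := by
  rw [le_div_iff₀ (sub_pos.2 hγ)]
  linarith

noncomputable def greedyValue {S A : Type*} (Q : S × A → ℝ) (s : S) : ℝ := ⨆ a, Q (s, a)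

section Bellman

variable {S A : Type*} [Fintype S] [Fintype A]

lemma norm_greedyValue_sub_le (Q Q' : S × A → ℝ) :
    ‖greedyValue Q - greedyValue Q'‖ ≤ ‖Q - Q'‖ :=
  (pi_norm_le_iff_of_nonneg (norm_nonneg _)).2 fun s =>
    abs_iSup_sub_iSup_le (norm_nonneg _) fun a => norm_le_pi_norm (Q - Q') (s, a)

lemma norm_greedyValue_le (Q : S × A → ℝ) : ‖greedyValue Q‖ ≤ ‖Q‖ := by
  have h0 : greedyValue (0 : S × A → ℝ) = 0 := funext fun _ => Real.iSup_const_zero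
  simpa [h0] using norm_greedyValue_sub_le Q 0

variable {R Q Q' : S × A → ℝ} {P P' : S × A → S → ℝ} {γ : ℝ}

theorem norm_le_of_bellman (hγ0 : 0 ≤ γ) (hγ1 : γ < 1) (hP0 : ∀ z s', 0 ≤ P z s')
    (hP1 : ∀ z, ∑ s', P z s' = 1)
    (hQ : ∀ z, Q z = R z + γ * ∑ s', P z s' * greedyValue Q s') :
    ‖Q‖ ≤ ‖R‖ / (1 - γ) := by
  refine le_div_one_sub_of_le_add_mul hγ1 <| (pi_norm_le_iff_of_nonneg <|
    add_nonneg (norm_nonneg _) (mul_nonneg hγ0 (norm_nonneg _))).2 fun z => ?_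
  rw [hQ z, Real.norm_eq_abs]
  calc |R z + γ * ∑ s', P z s' * greedyValue Q s'|
      ≤ |R z| + γ * |∑ s', P z s' * greedyValue Q s'| := by
        simpa only [abs_mul, abs_of_nonneg hγ0] using abs_add_le (R z) (γ * ∑ s', P z s' * greedyValue Q s')
    _ ≤ ‖R‖ + γ * ‖Q‖ := by
        gcongr
        · exact norm_le_pi_norm R z
        · exact (abs_sum_mul_le_norm (hP0 z) (hP1 z)).trans (norm_greedyValue_le Q)

theorem norm_sub_le_of_bellman_of_abs_sub_le (hγ0 : 0 ≤ γ) (hγ1 : γ < 1) {ε : ℝ} (hε : 0 ≤ ε)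
    (hP1 : ∀ z, ∑ s', P z s' = 1) (hP'0 : ∀ z s', 0 ≤ P' z s') (hP'1 : ∀ z, ∑ s', P' z s' = 1)
    (hPP' : ∀ z s', |P z s' - P' z s'| ≤ ε * P z s')
    (hQ : ∀ z, Q z = R z + γ * ∑ s', P z s' * greedyValue Q s')
    (hQ' : ∀ z, Q' z = R z + γ * ∑ s', P' z s' * greedyValue Q' s') :
    ‖Q - Q'‖ ≤ γ * ε * ‖Q‖ / (1 - γ) := by
  set V := greedyValue Q
  set V' := greedyValue Q'
  refine le_div_one_sub_of_le_add_mul hγ1 <| (pi_norm_le_iff_of_nonneg <|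
    add_nonneg (by positivity) (mul_nonneg hγ0 (norm_nonneg _))).2 fun z => ?_
  have hsplit : Q z - Q' z =
      γ * (∑ s', (P z s' - P' z s') * V s' + ∑ s', P' z s' * (V - V') s') := by
    simp only [hQ z, hQ' z, Pi.sub_apply, sub_mul, mul_sub, sum_sub_distrib]
    ring
  rw [Pi.sub_apply, Real.norm_eq_abs, hsplit, abs_mul, abs_of_nonneg hγ0, mul_assoc, ← mul_add]
  refine mul_le_mul_of_nonneg_left ((abs_add_le _ _).trans (add_le_add ?_ ?_)) hγ0
  · exact (abs_sum_mul_le_mul_norm (hP1 z) (hPP' z)).trans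
      (mul_le_mul_of_nonneg_left (norm_greedyValue_le Q) hε)
  · exact (abs_sum_mul_le_norm (hP'0 z) (hP'1 z)).trans (norm_greedyValue_sub_le Q Q')

end Bellman

theorem q_perturbation_bound_general
    {S A : Type*} [Fintype S] [Fintype A]
    {m : ℕ}
    (R : S × A → ℝ) (hR : ∀ z, R z ∈ Set.Icc (0 : ℝ) 1)
    (γ : ℝ) (hγ : γ ∈ Set.Ioo (0 : ℝ) 1)
    (β : ℝ) (hβ : β = 1 / (1 - γ))
    (L : ℝ) (hL : 0 ≤ L)
    (μ₁ μ₂ : EuclideanSpace ℝ (Fin m))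
    (f : S × A → S → EuclideanSpace ℝ (Fin m) → ℝ)
    (P P' : S × A → S → ℝ)
    (hP : ∀ z s', P z s' = f z s' μ₁) (hP' : ∀ z s', P' z s' = f z s' μ₂)
    (hP0 : ∀ z s', 0 ≤ P z s') (hP1 : ∀ z, ∑ s', P z s' = 1)
    (hP'0 : ∀ z s', 0 ≤ P' z s') (hP'1 : ∀ z, ∑ s', P' z s' = 1)
    (hLip : ∀ z s' ν₁ ν₂, |f z s' ν₁ - f z s' ν₂| ≤ L * P z s' * ‖ν₁ - ν₂‖)
    (Q Q' : S × A → ℝ)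
    (hQ : ∀ z : S × A, Q z = R z + γ * ∑ s', P z s' * ⨆ a', Q (s', a'))
    (hQ' : ∀ z : S × A, Q' z = R z + γ * ∑ s', P' z s' * ⨆ a', Q' (s', a')) :
    ∀ z : S × A, |Q z - Q' z| ≤ γ * β ^ 2 * L * ‖μ₁ - μ₂‖ := by
  obtain ⟨hγ0, hγ1⟩ := hγ
  have h1γ : 0 < 1 - γ := sub_pos.2 hγ1
  have hR1 : ‖R‖ ≤ 1 := (pi_norm_le_iff_of_nonneg zero_le_one).2 fun z => by
    rw [Real.norm_eq_abs, abs_le]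
    exact ⟨by linarith [(hR z).1], (hR z).2⟩
  have hQβ : ‖Q‖ ≤ β := by
    rw [hβ]
    exact (norm_le_of_bellman hγ0.le hγ1 hP0 hP1 hQ).trans (by gcongr)
  have hPP' : ∀ z s', |P z s' - P' z s'| ≤ L * ‖μ₁ - μ₂‖ * P z s' := fun z s' =>
    calc |P z s' - P' z s'| = |f z s' μ₁ - f z s' μ₂| := by rw [hP, hP']
      _ ≤ L * P z s' * ‖μ₁ - μ₂‖ := hLip z s' μ₁ μ₂
      _ = L * ‖μ₁ - μ₂‖ * P z s' := mul_right_comm _ _ _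
  intro z
  calc |Q z - Q' z| ≤ ‖Q - Q'‖ := norm_le_pi_norm (Q - Q') z
    _ ≤ γ * (L * ‖μ₁ - μ₂‖) * ‖Q‖ / (1 - γ) := norm_sub_le_of_bellman_of_abs_sub_le hγ0.le hγ1
        (by positivity) hP1 hP'0 hP'1 hPP' hQ hQ'
    _ ≤ γ * (L * ‖μ₁ - μ₂‖) * β / (1 - γ) := by gcongr
    _ = γ * β ^ 2 * L * ‖μ₁ - μ₂‖ := by rw [hβ]; field_simp

/-- Deterministic structural perturbation bound on the optimal Q-function: if the two
transition models are reconstructed from parameter vectors `μ₁` and `μ₂` through the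
`(L·P(s′|z))`-Lipschitz structural functions, then the optimal action-value functions
differ by at most `γβ²L‖μ₁ − μ₂‖₂`. -/
theorem q_perturbation_bound
    {S A : Type*} [Fintype S] [Fintype A] [Nonempty S] [Nonempty A]
    {m : ℕ}
    (R : S × A → ℝ) (hR : ∀ z, R z ∈ Set.Icc (0 : ℝ) 1)
    (γ : ℝ) (hγ : γ ∈ Set.Ioo (0 : ℝ) 1)
    (β : ℝ) (hβ : β = 1 / (1 - γ))
    (L : ℝ) (hL : 0 ≤ L)
    (μ₁ μ₂ : EuclideanSpace ℝ (Fin m))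
    (f : S × A → S → EuclideanSpace ℝ (Fin m) → ℝ)
    (P P' : S × A → S → ℝ)
    (hP : ∀ z s', P z s' = f z s' μ₁) (hP' : ∀ z s', P' z s' = f z s' μ₂)
    (hP0 : ∀ z s', 0 ≤ P z s') (hP1 : ∀ z, ∑ s', P z s' = 1)
    (hP'0 : ∀ z s', 0 ≤ P' z s') (hP'1 : ∀ z, ∑ s', P' z s' = 1)
    (hLip : ∀ z s' ν₁ ν₂, |f z s' ν₁ - f z s' ν₂| ≤ L * P z s' * ‖ν₁ - ν₂‖)
    (Q Q' : S × A → ℝ)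
    (hQ : ∀ z : S × A, Q z = R z + γ * ∑ s', P z s' * ⨆ a', Q (s', a'))
    (hQ' : ∀ z : S × A, Q' z = R z + γ * ∑ s', P' z s' * ⨆ a', Q' (s', a')) :
    ∀ z : S × A, |Q z - Q' z| ≤ γ * β ^ 2 * L * ‖μ₁ - μ₂‖ :=
  q_perturbation_bound_general R hR γ hγ β hβ L hL μ₁ μ₂ f P P' hP hP' hP0 hP1 hP'0 hP'1 hLip Q Q'
    hQ hQ'
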